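/- arXiv:2410.07913 — 5 statements merged into one kernel-verified Lean document; each statement's English description precedes it below -/
import Mathlib

section
/- Let m ≥ 2 be an integer and let F(t) ∈ Q(v)[[t]] be the unique series with F(0)=1 satisfying F(t) = Π_{i=1}^{m} (1 − v^{2i−m−1} t Π_{j=1}^{m−2} F(v^{2i−2j−2} t))^{−1}. Then F satisfies the v-difference equation ΔF(t) = ∇^{(m−1)}(t·Π_{i=1}^{m−1} F(v^{m−2i} t)), where (ΔF)(t) = (F(vt) − F(v^{−1}t))/(v − v^{−1}) and (∇^{(k)}B)(t) = (v·B(v^k t) − v^{−1}·B(v^{−k} t))/(v − v^{−1}). -/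
/-!
Write the functional equation as `F · ∏_{i=1}^m (1 - T(2i)) = 1`, where `T(c) = rhsTerm m F c` is
`v^(c-m-1) t ∏_j F(v^(c-2j-2) t)`. Substituting `t ↦ v^a t` maps `T(c)` to `T(c + a)`, so the two
substitutions `t ↦ vt` and `t ↦ v⁻¹t` turn the equation into
`F(vt) ∏_{i=1}^m (1 - T(2i+1)) = 1 = F(v⁻¹t) ∏_{i=0}^{m-1} (1 - T(2i+1))`.
Cancelling the common factors leaves `F(vt) (1 - T(2m+1)) = F(v⁻¹t) (1 - T(1))`, that is
`F(vt) - F(v⁻¹t) = F(vt) T(2m+1) - F(v⁻¹t) T(1)`, and the two terms on the right are exactly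
`v B(v^(m-1) t)` and `v⁻¹ B(v^(1-m) t)` for `B(t) = t ∏_{i=1}^{m-1} F(v^(m-2i) t)`.
-/

open PowerSeries Finset

noncomputable section

/-- The field `ℚ(v)` of rational functions. -/
abbrev K : Type := RatFunc ℚ

/-- The variable `v`. -/
def v : K := RatFunc.X

/-- `scale a B` is the series `B(v^a t)`: the `t^d`-coefficient is multiplied by `v^(a*d)`. -/
def scale (a : ℤ) (B : PowerSeries K) : PowerSeries K :=
  PowerSeries.mk fun d => v ^ (a * d) * PowerSeries.coeff d B

/-- `(ΔB)(t) = (B(vt) - B(v⁻¹t))/(v - v⁻¹)`. -/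
def delta (B : PowerSeries K) : PowerSeries K :=
  PowerSeries.C ((v - v⁻¹)⁻¹) * (scale 1 B - scale (-1) B)

/-- `(∇^(k)B)(t) = (v·B(v^k t) - v⁻¹·B(v^{-k} t))/(v - v⁻¹)`. -/
def nabla (k : ℤ) (B : PowerSeries K) : PowerSeries K :=
  PowerSeries.C ((v - v⁻¹)⁻¹) *
    (PowerSeries.C v * scale k B - PowerSeries.C v⁻¹ * scale (-k) B)


/-- The right-hand side of the algebraic functional equation:
`Π_{i=1}^{m} (1 - v^(2i-m-1)·t·Π_{j=1}^{m-2} F(v^(2i-2j-2) t))⁻¹`. -/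
def rhsF (m : ℕ) (F : PowerSeries K) : PowerSeries K :=
  ∏ i ∈ Finset.Icc 1 m,
    (1 - PowerSeries.C (v ^ (2 * (i : ℤ) - m - 1)) * PowerSeries.X *
        ∏ j ∈ Finset.Icc 1 (m - 2), scale (2 * (i : ℤ) - 2 * (j : ℤ) - 2) F)⁻¹

lemma Finset.prod_Icc_one_succ {M : Type*} [CommMonoid M] (f : ℕ → M) (n : ℕ) :
    ∏ i ∈ Icc 1 (n + 1), f i = f 1 * ∏ i ∈ Icc 1 n, f (i + 1) := by
  rw [← insert_Icc_add_one_left_eq_Icc (by omega : 1 ≤ n + 1), prod_insert (by simp),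
    ← map_add_right_Icc 1 n 1, prod_map]
  rfl

lemma map_mul_eq_map_mul_of_mul_prod_eq_one {M N G : Type*} [CommMonoid M] [CommMonoid N]
    [FunLike G M N] [MonoidHomClass G M N] (σ τ : G) {F : M} {u : ℕ → M} (n : ℕ)
    (hu : ∀ i, τ (u (i + 1)) = σ (u i)) (h : F * ∏ i ∈ Icc 1 (n + 1), u i = 1) :
    σ F * σ (u (n + 1)) = τ F * σ (u 0) := by
  have hσ := congrArg σ h
  have hτ := congrArg τ h
  rw [map_mul, map_prod, map_one, prod_Icc_succ_top (by omega)] at hσ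
  rw [map_mul, map_prod, map_one, prod_Icc_one_succ] at hτ
  simp only [hu] at hτ
  set Q := ∏ i ∈ Icc 1 n, σ (u i)
  calc σ F * σ (u (n + 1)) = σ F * σ (u (n + 1)) * (τ F * (σ (u 0) * Q)) := by rw [hτ, mul_one]
    _ = τ F * σ (u 0) * (σ F * (Q * σ (u (n + 1)))) := by ac_rfl
    _ = τ F * σ (u 0) := by rw [hσ, mul_one]

lemma v_ne_zero : v ≠ 0 := RatFunc.X_ne_zero

lemma scale_eq_rescale (a : ℤ) (B : PowerSeries K) : scale a B = rescale (v ^ a) B := by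
  ext d
  rw [coeff_rescale, scale, coeff_mk, ← zpow_natCast, ← zpow_mul]

lemma scale_mul (a : ℤ) (B C : PowerSeries K) : scale a (B * C) = scale a B * scale a C := by
  simp only [scale_eq_rescale, map_mul]

lemma scale_prod {ι : Type*} (a : ℤ) (s : Finset ι) (f : ι → PowerSeries K) :
    scale a (∏ i ∈ s, f i) = ∏ i ∈ s, scale a (f i) := by
  simp only [scale_eq_rescale, map_prod]

lemma scale_C (a : ℤ) (c : K) : scale a (C c) = C c := by
  ext d
  rw [scale, coeff_mk, coeff_C]
  split_ifs with hd <;> simp [hd]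

lemma scale_X (a : ℤ) : scale a (X : PowerSeries K) = C (v ^ a) * X := by
  rw [scale_eq_rescale, rescale_X]

lemma scale_scale (a b : ℤ) (B : PowerSeries K) : scale a (scale b B) = scale (a + b) B := by
  rw [scale_eq_rescale, scale_eq_rescale, scale_eq_rescale, rescale_rescale,
    ← zpow_add₀ v_ne_zero, add_comm]

def rhsTerm (m : ℕ) (F : PowerSeries K) (c : ℤ) : PowerSeries K :=
  C (v ^ (c - m - 1)) * X * ∏ j ∈ Icc 1 (m - 2), scale (c - 2 * (j : ℤ) - 2) F

lemma rhsF_eq_prod_rhsTerm (m : ℕ) (F : PowerSeries K) :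
    rhsF m F = ∏ i ∈ Icc 1 m, (1 - rhsTerm m F (2 * (i : ℤ)))⁻¹ :=
  rfl

lemma constantCoeff_rhsTerm (m : ℕ) (F : PowerSeries K) (c : ℤ) :
    constantCoeff (rhsTerm m F c) = 0 := by
  simp [rhsTerm]

lemma scale_rhsTerm (a : ℤ) (m : ℕ) (F : PowerSeries K) (c : ℤ) :
    scale a (rhsTerm m F c) = rhsTerm m F (c + a) := by
  simp only [rhsTerm, scale_mul, scale_C, scale_X, scale_prod, scale_scale]
  have hC : C (v ^ a) * C (v ^ (c - m - 1)) = C (v ^ (c + a - m - 1)) := by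
    rw [← map_mul, ← zpow_add₀ v_ne_zero]
    ring_nf
  have hP : ∏ j ∈ Icc 1 (m - 2), scale (a + (c - 2 * (j : ℤ) - 2)) F =
      ∏ j ∈ Icc 1 (m - 2), scale (c + a - 2 * (j : ℤ) - 2) F :=
    prod_congr rfl fun j _ => by ring_nf
  rw [← hC, hP]
  ring

lemma scale_sub_rhsTerm (a : ℤ) (m : ℕ) (F : PowerSeries K) (c : ℤ) :
    scale a (1 - rhsTerm m F c) = 1 - rhsTerm m F (c + a) := by
  rw [scale_eq_rescale, map_sub, map_one, ← scale_eq_rescale, scale_rhsTerm]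

lemma mul_prod_sub_rhsTerm_eq_one {m : ℕ} {F : PowerSeries K} (hF : F = rhsF m F) :
    F * ∏ i ∈ Icc 1 m, (1 - rhsTerm m F (2 * (i : ℤ))) = 1 := by
  nth_rewrite 1 [hF]
  rw [rhsF_eq_prod_rhsTerm, ← prod_mul_distrib]
  exact prod_eq_one fun i _ => PowerSeries.inv_mul_cancel _ (by simp [constantCoeff_rhsTerm])

lemma scale_mul_sub_rhsTerm {m : ℕ} (hm : 1 ≤ m) {F : PowerSeries K} (hF : F = rhsF m F) :
    scale 1 F * (1 - rhsTerm m F (2 * m + 1)) = scale (-1) F * (1 - rhsTerm m F 1) := by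
  obtain ⟨n, rfl⟩ : ∃ n, m = n + 1 := ⟨m - 1, by omega⟩
  have key := map_mul_eq_map_mul_of_mul_prod_eq_one (rescale (v ^ (1 : ℤ)))
    (rescale (v ^ (-1 : ℤ))) n (u := fun i : ℕ => 1 - rhsTerm (n + 1) F (2 * (i : ℤ)))
    (fun i => by simp only [← scale_eq_rescale, scale_sub_rhsTerm]; push_cast; ring_nf)
    (mul_prod_sub_rhsTerm_eq_one hF)
  simp only [← scale_eq_rescale, scale_sub_rhsTerm] at key
  exact_mod_cast key

lemma C_v_mul_scale_X_mul_prod {m : ℕ} (hm : 2 ≤ m) (F : PowerSeries K) :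
    C v * scale ((m : ℤ) - 1) (X * ∏ i ∈ Icc 1 (m - 1), scale ((m : ℤ) - 2 * (i : ℤ)) F) =
      scale 1 F * rhsTerm m F (2 * m + 1) := by
  obtain ⟨n, rfl⟩ : ∃ n, m = n + 2 := ⟨m - 2, by omega⟩
  simp only [rhsTerm, scale_mul, scale_X, scale_prod, scale_scale, Nat.add_sub_cancel,
    show n + 2 - 1 = n + 1 from rfl, prod_Icc_succ_top (by omega : 1 ≤ n + 1)]
  push_cast
  have hC : C v * C (v ^ ((n : ℤ) + 2 - 1)) = C (v ^ (2 * ((n : ℤ) + 2) + 1 - (n + 2) - 1)) := by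
    rw [← map_mul, ← zpow_one_add₀ v_ne_zero]
    ring_nf
  have hP : ∏ j ∈ Icc 1 n, scale ((n : ℤ) + 2 - 1 + (n + 2 - 2 * j)) F =
      ∏ j ∈ Icc 1 n, scale (2 * ((n : ℤ) + 2) + 1 - 2 * j - 2) F :=
    prod_congr rfl fun j _ => by ring_nf
  rw [show (n : ℤ) + 2 - 1 + (n + 2 - 2 * (n + 1)) = 1 by ring, hP, ← hC]
  ring

lemma C_v_inv_mul_scale_X_mul_prod {m : ℕ} (hm : 2 ≤ m) (F : PowerSeries K) :
    C v⁻¹ * scale (-((m : ℤ) - 1)) (X * ∏ i ∈ Icc 1 (m - 1), scale ((m : ℤ) - 2 * (i : ℤ)) F) =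
      scale (-1) F * rhsTerm m F 1 := by
  obtain ⟨n, rfl⟩ : ∃ n, m = n + 2 := ⟨m - 2, by omega⟩
  simp only [rhsTerm, scale_mul, scale_X, scale_prod, scale_scale, Nat.add_sub_cancel,
    show n + 2 - 1 = n + 1 from rfl, prod_Icc_one_succ]
  push_cast
  have hC : C v⁻¹ * C (v ^ (-((n : ℤ) + 2 - 1))) = C (v ^ (1 - ((n : ℤ) + 2) - 1)) := by
    rw [← map_mul, ← zpow_neg_one, ← zpow_add₀ v_ne_zero]
    ring_nf
  have hP : ∏ j ∈ Icc 1 n, scale (-((n : ℤ) + 2 - 1) + (n + 2 - 2 * (j + 1))) F =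
      ∏ j ∈ Icc 1 n, scale (1 - 2 * (j : ℤ) - 2) F :=
    prod_congr rfl fun j _ => by ring_nf
  rw [show -((n : ℤ) + 2 - 1) + (n + 2 - 2) = -1 by ring, hP, ← hC]
  ring

theorem F_vdifference_general (m : ℕ) (hm : 2 ≤ m) (F : PowerSeries K)
    (hF : F = rhsF m F) :
    delta F = nabla ((m : ℤ) - 1)
      (PowerSeries.X * ∏ i ∈ Finset.Icc 1 (m - 1), scale ((m : ℤ) - 2 * (i : ℤ)) F) := by
  have hcancel := scale_mul_sub_rhsTerm (by omega) hF
  rw [delta, nabla, C_v_mul_scale_X_mul_prod hm, C_v_inv_mul_scale_X_mul_prod hm]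
  congr 1
  linear_combination hcancel

/-- The solution of the algebraic functional equation satisfies the
`v`-difference equation `ΔF(t) = ∇^(m-1)(t·Π_{i=1}^{m-1} F(v^(m-2i) t))`. -/
theorem F_vdifference (m : ℕ) (hm : 2 ≤ m) (F : PowerSeries K)
    (h0 : PowerSeries.coeff 0 F = 1) (hF : F = rhsF m F) :
    delta F = nabla ((m : ℤ) - 1)
      (PowerSeries.X * ∏ i ∈ Finset.Icc 1 (m - 1), scale ((m : ℤ) - 2 * (i : ℤ)) F) :=
  F_vdifference_general m hm F hF
end
end

section
/- Fix m ≥ 3. Let F̄(t) ∈ Q[[t]] satisfy F̄(0)=1 and F̄(t) = (1 − t·F̄(t)^{m−2})^{−m}. Then the series U(t) = F̄(t)^{1/m} (the unique m-th root with constant term 1) satisfies the functional equation U(t) = 1 + t·U(t)^{(m−1)^2}. -/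
/-!
Uniqueness of `m`-th roots with constant term `1` identifies `U` with `(1 - t F̄^(m-2))⁻¹`,
i.e. `U (1 - t U^(m(m-2))) = 1`; since `m(m-2) + 1 = (m-1)²` this is the functional equation.
-/

open PowerSeries Finset

noncomputable section

namespace PowerSeries

theorem eq_of_pow_eq_pow_of_constantCoeff_eq_one {R : Type*} [CommRing R] [IsDomain R]
    [CharZero R] {m : ℕ} (hm : m ≠ 0) {f g : R⟦X⟧} (hf : constantCoeff f = 1)
    (hg : constantCoeff g = 1) (h : f ^ m = g ^ m) : f = g := by
  -- the cofactor of `f - g` in `f ^ m - g ^ m` has constant coefficient `m ≠ 0`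
  have hcofactor : ∑ i ∈ range m, f ^ i * g ^ (m - 1 - i) ≠ 0 := by
    intro hzero
    have := congrArg constantCoeff hzero
    simp [hf, hg] at this
    exact hm this
  have hprod : (∑ i ∈ range m, f ^ i * g ^ (m - 1 - i)) * (f - g) = 0 := by
    rw [geom_sum₂_mul, h, sub_self]
  exact sub_eq_zero.mp ((mul_eq_zero.mp hprod).resolve_left hcofactor)

end PowerSeries

theorem root_functional_equation_general (m : ℕ) (hm : 3 ≤ m) (F U : PowerSeries ℚ)
    (hF : F = ((1 - PowerSeries.X * F ^ (m - 2))⁻¹) ^ m)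
    (hU0 : PowerSeries.coeff 0 U = 1) (hUm : U ^ m = F) :
    U = 1 + PowerSeries.X * U ^ ((m - 1) ^ 2) := by
  have hD : constantCoeff (1 - X * F ^ (m - 2)) = 1 := by simp
  have hU_eq_inv : U = (1 - X * F ^ (m - 2))⁻¹ :=
    eq_of_pow_eq_pow_of_constantCoeff_eq_one (by omega)
      (by rwa [← coeff_zero_eq_constantCoeff_apply]) (by simp [hD]) (hUm.trans hF)
  have hU_mul : U * (1 - X * U ^ (m * (m - 2))) = 1 := by
    rw [pow_mul, hUm, hU_eq_inv]
    exact PowerSeries.inv_mul_cancel _ (by simp [hD])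
  have hexp : (m - 1) ^ 2 = m * (m - 2) + 1 := by
    obtain ⟨k, rfl⟩ : ∃ k, m = k + 2 := ⟨m - 2, by omega⟩
    rw [show k + 2 - 1 = k + 1 by omega, Nat.add_sub_cancel]
    ring
  rw [hexp, pow_succ]
  linear_combination hU_mul

/-- If `F̄(0)=1` satisfies `F̄ = (1 - t·F̄^(m-2))^(-m)` and `U` is its `m`-th root
with constant term `1`, then `U = 1 + t·U^((m-1)²)`. -/
theorem root_functional_equation (m : ℕ) (hm : 3 ≤ m) (F U : PowerSeries ℚ)
    (h0 : PowerSeries.coeff 0 F = 1)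
    (hF : F = ((1 - PowerSeries.X * F ^ (m - 2))⁻¹) ^ m)
    (hU0 : PowerSeries.coeff 0 U = 1) (hUm : U ^ m = F) :
    U = 1 + PowerSeries.X * U ^ ((m - 1) ^ 2) :=
  root_functional_equation_general m hm F U hF hU0 hUm
end
end

section
/- Lagrange inversion (power form): Let V(x) ∈ Q[[x]] with V(0) ≠ 0, and let U(x) ∈ Q[[x]] be the unique series satisfying U(x) = V(x·U(x)). Then for all integers k ≥ 1 and d ≥ 0, (k+d)·[x^d]U(x)^k = k·[x^d]V(x)^{k+d}, where [x^d] denotes extraction of the coefficient of x^d. -/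
/-! Since `X * U` has zero constant term, substitution `A ↦ A(X * U)` is a ring map, so
`U = V(X * U)` gives `U ^ k = V ^ k (X * U)`, i.e. `[x^d] U^k = ∑ₘ [x^m] V^k · [x^(d-m)] U^m`.
Induct on `d`: multiplied by `d`, and with the induction hypothesis
`d · [x^(d-m)] U^m = m · [x^(d-m)] V^d` for `m ≥ 1`, the right side becomes
`[x^(d-1)] (V^k)' V^d`, and `(k + d) (V^k)' V^d = k (V^(k+d))'`. -/

open PowerSeries Finset

noncomputable section

namespace PowerSeries

variable {R : Type*} [CommRing R]

theorem coeff_subst_X_mul (f U : R⟦X⟧) (d : ℕ) :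
    coeff d (f.subst (X * U)) = ∑ m ∈ range (d + 1), coeff m f * coeff (d - m) (U ^ m) := by
  have hXU : HasSubst (X * U) := HasSubst.of_constantCoeff_zero' (by simp)
  rw [coeff_subst' hXU, finsum_eq_sum_of_support_subset (s := range (d + 1))]
  · refine sum_congr rfl fun m hm => ?_
    rw [mul_pow, coeff_X_pow_mul', if_pos (by simpa [Nat.lt_succ_iff] using hm), smul_eq_mul]
  · intro m hm
    by_contra h
    rw [mem_coe, mem_range] at h
    exact hm (by dsimp only; rw [mul_pow, coeff_X_pow_mul', if_neg (by omega), smul_zero])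

theorem eq_subst_X_mul_of_coeff_eq {U V : R⟦X⟧}
    (hUV : ∀ d : ℕ, coeff d U = ∑ m ∈ range (d + 1), coeff m V * coeff (d - m) (U ^ m)) :
    U = V.subst (X * U) := by
  ext d
  rw [hUV, coeff_subst_X_mul]

theorem coeff_pow_eq_sum_of_coeff_eq {U V : R⟦X⟧}
    (hUV : ∀ d : ℕ, coeff d U = ∑ m ∈ range (d + 1), coeff m V * coeff (d - m) (U ^ m))
    (k d : ℕ) :
    coeff d (U ^ k) = ∑ m ∈ range (d + 1), coeff m (V ^ k) * coeff (d - m) (U ^ m) := by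
  have hXU : HasSubst (X * U) := HasSubst.of_constantCoeff_zero' (by simp)
  rw [← coeff_subst_X_mul, subst_pow hXU, ← eq_subst_X_mul_of_coeff_eq hUV]

theorem sum_coeff_mul_natCast_mul_coeff (A B : R⟦X⟧) (d : ℕ) :
    ∑ m ∈ range (d + 2), coeff m A * (m * coeff (d + 1 - m) B) = coeff d (d⁄dX R A * B) := by
  rw [sum_range_succ', coeff_mul, Nat.sum_antidiagonal_eq_sum_range_succ_mk]
  simp only [Nat.cast_zero, zero_mul, mul_zero, add_zero, Nat.succ_eq_add_one, coeff_derivative]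
  refine sum_congr rfl fun j _ => ?_
  rw [show d + 1 - (j + 1) = d - j by omega]
  push_cast
  ring

theorem add_nsmul_derivative_pow_mul_pow (V : R⟦X⟧) {k : ℕ} (hk : 1 ≤ k) (d : ℕ) :
    (k + d) • (d⁄dX R (V ^ k) * V ^ d) = k • d⁄dX R (V ^ (k + d)) := by
  rw [derivative_pow, derivative_pow, show k + d - 1 = (k - 1) + d by omega, pow_add]
  simp only [nsmul_eq_mul]
  push_cast
  ring

theorem add_mul_coeff_pow_eq_of_coeff_eq [IsAddTorsionFree R] {U V : R⟦X⟧}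
    (hUV : ∀ d : ℕ, coeff d U = ∑ m ∈ range (d + 1), coeff m V * coeff (d - m) (U ^ m))
    {k : ℕ} (hk : 1 ≤ k) (d : ℕ) :
    ((k : R) + d) * coeff d (U ^ k) = k * coeff d (V ^ (k + d)) := by
  induction d using Nat.strong_induction_on generalizing k with
  | _ d ih =>
    rcases d with _ | d
    · have h0 : constantCoeff U = constantCoeff V := by simpa using hUV 0
      simp [h0]
    have hsum : ((d + 1 : ℕ) : R) * coeff (d + 1) (U ^ k) =
        ∑ m ∈ range (d + 2), coeff m (V ^ k) * (m * coeff (d + 1 - m) (V ^ (d + 1))) := by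
      rw [coeff_pow_eq_sum_of_coeff_eq hUV, mul_sum]
      refine sum_congr rfl fun m hm => ?_
      rw [mem_range] at hm
      rcases m.eq_zero_or_pos with rfl | hm0
      · simp [coeff_one]
      · have h := ih (d + 1 - m) (by omega) hm0
        rw [Nat.add_sub_cancel' (by omega)] at h
        rw [← h]
        push_cast [Nat.cast_sub (show m ≤ d + 1 by omega)]
        ring
    refine (nsmul_right_inj d.succ_ne_zero).mp ?_
    simp only [nsmul_eq_mul]
    calc ((d + 1 : ℕ) : R) * ((k + ↑(d + 1)) * coeff (d + 1) (U ^ k))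
        = coeff d ((k + (d + 1)) • (d⁄dX R (V ^ k) * V ^ (d + 1))) := by
          rw [map_nsmul, ← sum_coeff_mul_natCast_mul_coeff, ← hsum, nsmul_eq_mul]
          push_cast
          ring
      _ = coeff d (k • d⁄dX R (V ^ (k + (d + 1)))) := by
          rw [add_nsmul_derivative_pow_mul_pow V hk]
      _ = ((d + 1 : ℕ) : R) * (k * coeff (d + 1) (V ^ (k + (d + 1)))) := by
          rw [map_nsmul, nsmul_eq_mul, coeff_derivative]
          push_cast
          ring

end PowerSeries

theorem lagrange_inversion_general (U V : PowerSeries ℚ)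
    (hUV : ∀ d : ℕ, PowerSeries.coeff d U =
      ∑ k ∈ Finset.range (d + 1),
        PowerSeries.coeff k V * PowerSeries.coeff (d - k) (U ^ k)) :
    ∀ k d : ℕ, 1 ≤ k →
      ((k : ℚ) + d) * PowerSeries.coeff d (U ^ k) =
        (k : ℚ) * PowerSeries.coeff d (V ^ (k + d)) :=
  fun _ d hk => add_mul_coeff_pow_eq_of_coeff_eq hUV hk d

/-- Lagrange inversion in power form: if `U(x) = V(x·U(x))` (encoded coefficientwise:
`[x^d]U = Σ_{k≤d} [x^k]V · [x^(d-k)](U^k)`, since `V(xU) = Σ_k ([x^k]V)·x^k·U^k`)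
with `V(0) ≠ 0`, then `(k+d)·[x^d]U^k = k·[x^d]V^(k+d)`. -/
theorem lagrange_inversion (U V : PowerSeries ℚ)
    (hV0 : PowerSeries.coeff 0 V ≠ 0)
    (hUV : ∀ d : ℕ, PowerSeries.coeff d U =
      ∑ k ∈ Finset.range (d + 1),
        PowerSeries.coeff k V * PowerSeries.coeff (d - k) (U ^ k)) :
    ∀ k d : ℕ, 1 ≤ k →
      ((k : ℚ) + d) * PowerSeries.coeff d (U ^ k) =
        (k : ℚ) * PowerSeries.coeff d (V ^ (k + d)) :=
  lagrange_inversion_general U V hUV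
end
end

section
/- Fix m ≥ 3. Let F̄(t), Ḡ(t) ∈ Q[[t]] with F̄(0) = Ḡ(0) = 1, F̄(t) = (1 − t F̄(t)^{m−2})^{−m}, and Ḡ'(t) = F̄(t)^{m−1}. Then for all d ≥ 1, the coefficient of t^d in Ḡ(t) equals (m/(d((m−1)d+1)))·C((m−1)^2 d + m − 1, d − 1). -/
open PowerSeries Finset

noncomputable section

/-!
With `B = (1 - t F̄^(m-2))⁻¹` the functional equation reads `F̄ = B^m`, and `B (1 - t B^(m(m-2))) = 1`
turns into `B = 1 + t B^p` with `p = (m-1)^2`. Powers of such a series have Fuss–Catalan coefficients,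
`[t^d] B^k = k/(pd+k) · C(pd+k, d)`: expanding `B^k = Σ_j C(k,j) t^j B^(pj)`, the induction hypothesis
turns every term into `(j/d) C(k,j) C(pd, d-j)`, which Vandermonde's identity sums. Finally
`d [t^d] Ḡ = [t^(d-1)] F̄^(m-1) = [t^(d-1)] B^(m(m-1))`.
-/

theorem sum_range_choose_mul_add_one_mul_choose (K n s : ℕ) :
    ∑ i ∈ range (s + 1), (K + 1).choose (i + 1) * (i + 1) * n.choose (s - i) =
      (K + 1) * (K + n).choose s := by
  simp_rw [← Nat.add_one_mul_choose_eq, mul_assoc, ← mul_sum,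
    Nat.add_choose_eq, Nat.sum_antidiagonal_eq_sum_range_succ_mk]

theorem coeff_pow_eq_sum_of_eq_one_add_X_mul_pow {R : Type*} [CommSemiring R] {B : R⟦X⟧} {p : ℕ}
    (hB : B = 1 + X * B ^ p) (k d : ℕ) :
    coeff d (B ^ k) = ∑ j ∈ range (d + 1), (k.choose j : R) * coeff (d - j) (B ^ (p * j)) := by
  set f : ℕ → R := fun j => k.choose j * coeff d (X ^ j * B ^ (p * j))
  have hf : ∀ j ≥ min k d + 1, f j = 0 := by
    intro j hj
    rcases le_or_gt j d with hjd | hjd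
    · simp [f, Nat.choose_eq_zero_of_lt (show k < j by omega)]
    · simp [f, coeff_X_pow_mul', show ¬ j ≤ d by omega]
  calc coeff d (B ^ k) = ∑ j ∈ range (k + 1), f j := by
        conv_lhs => rw [hB]
        rw [add_comm, add_pow, map_sum]
        refine sum_congr rfl fun j _ => ?_
        rw [one_pow, mul_one, mul_pow, ← pow_mul, ← map_natCast (C (R := R)), coeff_mul_C,
          mul_comm]
    _ = ∑ j ∈ range (d + 1), f j := by
        rw [eventually_constant_sum hf (n := k + 1) (by omega),
          eventually_constant_sum hf (n := d + 1) (by omega)]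
    _ = _ := sum_congr rfl fun j hj => by
        rw [mem_range] at hj
        simp [f, coeff_X_pow_mul', show j ≤ d by omega]

theorem constantCoeff_of_eq_one_add_X_mul_pow {R : Type*} [CommSemiring R] {B : R⟦X⟧} {p : ℕ}
    (hB : B = 1 + X * B ^ p) : constantCoeff B = 1 := by
  rw [hB]; simp
theorem cast_choose_succ_div_succ {R : Type*} [Field R] [CharZero R] (N s : ℕ) :
    ((N + 1).choose (s + 1) : R) / (N + 1 : ℕ) = N.choose s / (s + 1 : ℕ) := by
  rw [div_eq_div_iff (Nat.cast_ne_zero.mpr N.succ_ne_zero) (Nat.cast_ne_zero.mpr s.succ_ne_zero)]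
  exact_mod_cast (Nat.add_one_mul_choose_eq N s).symm.trans (mul_comm _ _)

theorem coeff_pow_of_eq_one_add_X_mul_pow {R : Type*} [Field R] [CharZero R] {B : R⟦X⟧} {p : ℕ}
    (hp : 0 < p) (hB : B = 1 + X * B ^ p) (d : ℕ) :
    ∀ k : ℕ, 0 < k → coeff d (B ^ k) = (k : R) / (p * d + k : ℕ) * (p * d + k).choose d := by
  induction d using Nat.strong_induction_on with
  | _ d ih =>
  intro k hk
  rcases d with _ | s
  · have hk0 : (k : R) ≠ 0 := Nat.cast_ne_zero.mpr hk.ne'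
    simp [coeff_zero_eq_constantCoeff, constantCoeff_of_eq_one_add_X_mul_pow hB, hk0]
  have hterm : ∀ i ∈ range (s + 1), coeff (s + 1 - (i + 1)) (B ^ (p * (i + 1))) =
      ((i + 1 : ℕ) : R) / (s + 1 : ℕ) * (p * (s + 1)).choose (s - i) := by
    intro i hi
    have hi : i ≤ s := Nat.lt_succ_iff.mp (mem_range.mp hi)
    have hsum : p * (s - i) + p * (i + 1) = p * (s + 1) := by rw [← mul_add]; congr 1; omega
    rw [Nat.add_sub_add_right, ih (s - i) (by omega) _ (by positivity), hsum]
    have : (p : R) ≠ 0 := Nat.cast_ne_zero.mpr hp.ne'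
    field_simp
    push_cast
    ring
  obtain ⟨K, rfl⟩ : ∃ K, k = K + 1 := ⟨k - 1, by omega⟩
  have hsum : ∑ i ∈ range (s + 1), ((K + 1).choose (i + 1) : R) *
      (((i + 1 : ℕ) : R) / (s + 1 : ℕ) * (p * (s + 1)).choose (s - i)) =
      ((K + 1) * (K + p * (s + 1)).choose s : ℕ) / (s + 1 : ℕ) := by
    rw [← sum_range_choose_mul_add_one_mul_choose, Nat.cast_sum, sum_div]
    refine sum_congr rfl fun i _ => ?_
    push_cast
    ring
  rw [coeff_pow_eq_sum_of_eq_one_add_X_mul_pow hB, sum_range_succ', sum_congr rfl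
    fun i hi => by rw [hterm i hi], hsum, show p * (s + 1) + (K + 1) = K + p * (s + 1) + 1 by ring,
    div_mul_eq_mul_div, mul_div_assoc, cast_choose_succ_div_succ]
  simp only [mul_zero, pow_zero, coeff_one]
  push_cast
  ring

theorem eq_one_add_X_mul_pow_of_eq_inv {k : Type*} [Field k] {B : k⟦X⟧} {q : ℕ}
    (hB : B = (1 - X * B ^ q)⁻¹) : B = 1 + X * B ^ (q + 1) := by
  have h := PowerSeries.inv_mul_cancel (1 - X * B ^ q) (by simp)
  rw [← hB] at h
  linear_combination h

theorem coeff_Gbar_general (m : ℕ) (hm : 3 ≤ m) (F G : PowerSeries ℚ)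
    (hF : F = ((1 - PowerSeries.X * F ^ (m - 2))⁻¹) ^ m)
    (hG : PowerSeries.derivative ℚ G = F ^ (m - 1)) :
    ∀ d : ℕ, 1 ≤ d → PowerSeries.coeff d G =
      ((m : ℚ) / (d * (((m : ℚ) - 1) * d + 1))) *
        Nat.choose ((m - 1) ^ 2 * d + m - 1) (d - 1) := by
  intro d hd
  obtain ⟨n, rfl⟩ : ∃ n, m = n + 2 := ⟨m - 2, by omega⟩
  obtain ⟨e, rfl⟩ : ∃ e, d = e + 1 := ⟨d - 1, by omega⟩
  simp only [Nat.add_sub_cancel, show n + 2 - 1 = n + 1 by omega] at hF hG ⊢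
  set B := (1 - X * F ^ n)⁻¹
  have hB : B = 1 + X * B ^ ((n + 2) * n + 1) :=
    eq_one_add_X_mul_pow_of_eq_inv (by rw [pow_mul, ← hF])
  have hcoeff := coeff_derivative G e
  rw [hG, hF, ← pow_mul, coeff_pow_of_eq_one_add_X_mul_pow (by omega) hB e _ (by positivity)] at hcoeff
  rw [show (n + 1) ^ 2 * (e + 1) + (n + 2) - 1 = ((n + 2) * n + 1) * e + (n + 2) * (n + 1) by
    ring_nf; omega]
  have hratio : (((n + 2) * (n + 1) : ℕ) : ℚ) / (((n + 2) * n + 1) * e + (n + 2) * (n + 1) : ℕ) =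
      (n + 2) / ((n + 1) * (e + 1) + 1) := by
    rw [div_eq_div_iff (by positivity) (by positivity)]
    push_cast
    ring
  rw [(eq_div_iff (by positivity)).mpr hcoeff.symm, hratio]
  push_cast
  rw [add_sub_assoc, show (2 : ℚ) - 1 = 1 by norm_num]
  field_simp

/-- The `t^d`-coefficient of `Ḡ`, where `Ḡ' = F̄^(m-1)` and `F̄ = (1 - t·F̄^(m-2))^(-m)`. -/
theorem coeff_Gbar (m : ℕ) (hm : 3 ≤ m) (F G : PowerSeries ℚ)
    (hF0 : PowerSeries.coeff 0 F = 1)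
    (hF : F = ((1 - PowerSeries.X * F ^ (m - 2))⁻¹) ^ m)
    (hG0 : PowerSeries.coeff 0 G = 1)
    (hG : PowerSeries.derivative ℚ G = F ^ (m - 1)) :
    ∀ d : ℕ, 1 ≤ d → PowerSeries.coeff d G =
      ((m : ℚ) / (d * (((m : ℚ) - 1) * d + 1))) *
        Nat.choose ((m - 1) ^ 2 * d + m - 1) (d - 1) :=
  coeff_Gbar_general m hm F G hF hG
end
end

section
/- For every integer m ≥ 3 and d ≥ 1, the rational number (m−1)/(d((m−2)d+1)) · C((m−1)^2 d + m − 2, d − 1) is a positive integer. -/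
open PowerSeries Finset

noncomputable section

/-!
Write `m = n + 2`, `d = e + 1`, `a = (n+1)²d + n` and `C = C(a, e)`; the claim is that
`d(nd+1)` divides `(n+1)·C`. Since `d` and `nd+1` are coprime it suffices to treat them
separately, and both come from the ratio of consecutive binomial coefficients: `d` divides
`(a-e)·C`, where `a-e ≡ n+1 (mod d)`, and `a-e+1 = (n+2)(nd+1)` divides `e·C`, where
`ne + (n+1) = nd+1`.
-/

namespace Nat

theorem add_one_dvd_sub_mul_choose (a k : ℕ) : k + 1 ∣ (a - k) * a.choose k :=
  ⟨a.choose (k + 1), by rw [mul_comm, ← choose_succ_right_eq, mul_comm]⟩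

theorem sub_add_one_dvd_mul_choose {a k : ℕ} (hk : k ≤ a) : a - k + 1 ∣ k * a.choose k := by
  simpa only [Nat.sub_sub_self hk, choose_symm hk] using add_one_dvd_sub_mul_choose a (a - k)

end Nat

section TamariIntervals

variable (n e : ℕ)

theorem tamari_index_eq : (n + 1) ^ 2 * (e + 1) + n = e + ((e + 1) * (n * (n + 2)) + (n + 1)) := by
  ring

theorem le_tamari_index : e ≤ (n + 1) ^ 2 * (e + 1) + n := by
  rw [tamari_index_eq]
  exact Nat.le_add_right _ _

theorem add_one_dvd_succ_mul_choose :
    e + 1 ∣ (n + 1) * ((n + 1) ^ 2 * (e + 1) + n).choose e := by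
  have hsub : (n + 1) ^ 2 * (e + 1) + n - e = (e + 1) * (n * (n + 2)) + (n + 1) := by
    rw [tamari_index_eq, Nat.add_sub_cancel_left]
  have h := Nat.add_one_dvd_sub_mul_choose ((n + 1) ^ 2 * (e + 1) + n) e
  rw [hsub, add_mul, mul_assoc] at h
  exact (Nat.dvd_add_right (dvd_mul_right _ _)).mp h

theorem mul_add_one_dvd_succ_mul_choose :
    n * (e + 1) + 1 ∣ (n + 1) * ((n + 1) ^ 2 * (e + 1) + n).choose e := by
  set C := ((n + 1) ^ 2 * (e + 1) + n).choose e
  have hsub : (n + 1) ^ 2 * (e + 1) + n - e + 1 = (n + 2) * (n * (e + 1) + 1) := by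
    rw [tamari_index_eq, Nat.add_sub_cancel_left]
    ring
  have h := Nat.sub_add_one_dvd_mul_choose (le_tamari_index n e)
  rw [hsub] at h
  have hsum : n * (e + 1) + 1 ∣ n * (e * C) + (n + 1) * C := ⟨C, by ring⟩
  exact (Nat.dvd_add_right (dvd_mul_of_dvd_right (dvd_of_mul_left_dvd h) n)).mp hsum

theorem mul_dvd_succ_mul_choose :
    (e + 1) * (n * (e + 1) + 1) ∣ (n + 1) * ((n + 1) ^ 2 * (e + 1) + n).choose e := by
  have hcop : (e + 1).Coprime (n * (e + 1) + 1) := by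
    simp [mul_comm n, Nat.coprime_mul_left_add_right]
  exact hcop.mul_dvd_of_dvd_of_dvd (add_one_dvd_succ_mul_choose n e)
    (mul_add_one_dvd_succ_mul_choose n e)

end TamariIntervals

/-- The rational number `(m-1)/(d((m-2)d+1)) · C((m-1)²d+m-2, d-1)` is a positive
integer (the number of intervals in the `(m-2)`-Tamari lattice of index `d`). -/
theorem integrality (m d : ℕ) (hm : 3 ≤ m) (hd : 1 ≤ d) :
    ∃ N : ℕ, 0 < N ∧
      (((m : ℚ) - 1) / (d * (((m : ℚ) - 2) * d + 1))) *
        Nat.choose ((m - 1) ^ 2 * d + m - 2) (d - 1) = N := by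
  obtain ⟨n, rfl⟩ : ∃ n, m = n + 2 := ⟨m - 2, by omega⟩
  obtain ⟨e, rfl⟩ : ∃ e, d = e + 1 := ⟨d - 1, by omega⟩
  have hindex : (n + 2 - 1) ^ 2 * (e + 1) + (n + 2) - 2 = (n + 1) ^ 2 * (e + 1) + n := by
    rw [show n + 2 - 1 = n + 1 by omega]
    omega
  rw [hindex, Nat.add_sub_cancel]
  obtain ⟨N, hN⟩ := mul_dvd_succ_mul_choose n e
  have hchoose : 0 < ((n + 1) ^ 2 * (e + 1) + n).choose e :=
    Nat.choose_pos (le_tamari_index n e)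
  refine ⟨N, Nat.pos_of_ne_zero ?_, ?_⟩
  · rintro rfl
    exact (Nat.mul_pos n.succ_pos hchoose).ne' (by simpa using hN)
  · have hNq := congrArg (Nat.cast : ℕ → ℚ) hN
    push_cast at hNq ⊢
    rw [add_sub_cancel_right, div_mul_eq_mul_div, div_eq_iff (by positivity)]
    linear_combination hNq
end
end
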